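/- Let d ≥ 2 and fix z ∈ S^{d−1}. Let σ̄ denote the uniform probability measure on S^{d−1}. Then the limit as t → 0+ of t^{−(d−1)/2} · σ̄({o ∈ S^{d−1} : ‖z − o‖₂² ≤ t}) equals V_{d−1}/A_{d−1}, where V_{d−1} = π^{(d−1)/2}/Γ(1 + (d−1)/2) is the volume of the unit ball in ℝ^{d−1} and A_{d−1} = 2π^{d/2}/Γ(d/2) is the surface area of S^{d−1}. -/

import Mathlib

/-!
Any two rotation-invariant probability measures `μ, ν` on the sphere agree on caps
`{o | s ≤ ⟪z, o⟫}`: slicing `(ν ⊗ μ) {(x, o) | s ≤ ⟪x, o⟫}` in either variable gives `μ(cap)`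
and `ν(cap)`, since by invariance every slice has the same measure. So one may compute with the
normalized cone measure, for which the cap is `vol(sector) / vol(B^d)`. On the sphere,
`‖z - o‖² ≤ t` means `⟪z, o⟫ ≥ s := 1 - t/2`, and the sector lies between the truncated cones
of slope `c = √(1 - s²)/s ~ √t` and heights `s` and `1`, of volumes `c^(d-1) s^d V_{d-1}/d` and
`c^(d-1) V_{d-1}/d`. Hence the limit is `V_{d-1} / (d V_d) = V_{d-1} / A_{d-1}`.
-/

open MeasureTheory

/-- The uniform (rotation-invariant) probability measure on the unit sphere, characterized as a
probability measure supported on the sphere and invariant under all linear isometries. -/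
def IsUniformOnSphere {ι : Type*} [Fintype ι] (μ : Measure (EuclideanSpace ℝ ι)) : Prop :=
  IsProbabilityMeasure μ ∧
  μ (Metric.sphere (0 : EuclideanSpace ℝ ι) 1)ᶜ = 0 ∧
  ∀ R : EuclideanSpace ℝ ι ≃ₗᵢ[ℝ] EuclideanSpace ℝ ι, Measure.map R μ = μ

/-- Volume of the unit ball in `ℝ^n`. -/
noncomputable def unitBallVol (n : ℕ) : ℝ := Real.pi ^ ((n : ℝ) / 2) / Real.Gamma (1 + (n : ℝ) / 2)

/-- Surface area of the unit sphere `S^{d-1} ⊂ ℝ^d`. -/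
noncomputable def sphereArea (d : ℕ) : ℝ := 2 * Real.pi ^ ((d : ℝ) / 2) / Real.Gamma ((d : ℝ) / 2)

open Metric Set Filter Topology RealInnerProductSpace

noncomputable section

section SphericalCap

variable {E : Type*} [NormedAddCommGroup E] [InnerProductSpace ℝ E]

def sphericalCap (z : E) (s : ℝ) : Set E := {o | ‖o‖ = 1 ∧ s ≤ ⟪z, o⟫}

lemma isClosed_sphericalCap (z : E) (s : ℝ) : IsClosed (sphericalCap z s) :=
  (isClosed_eq continuous_norm continuous_const).inter <|
    isClosed_le (f := fun _ ↦ s) (g := (⟪z, ·⟫)) continuous_const (by fun_prop)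

lemma preimage_reflection_sphericalCap {x z : E} (h : ‖z‖ = ‖x‖) (s : ℝ) :
    (ℝ ∙ (z - x))ᗮ.reflection ⁻¹' sphericalCap z s = sphericalCap x s := by
  set R := (ℝ ∙ (z - x))ᗮ.reflection
  have hinner (o : E) : ⟪z, R o⟫ = ⟪x, o⟫ := by
    rw [← R.inner_map_map, Submodule.reflection_sub h, Submodule.reflection_reflection]
  ext o
  simp only [sphericalCap, mem_preimage, mem_ofPred_eq, R.norm_map, hinner]

def sphericalCapPairs (s : ℝ) : Set (E × E) := {p | ‖p.1‖ = 1 ∧ ‖p.2‖ = 1 ∧ s ≤ ⟪p.1, p.2⟫}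

lemma isClosed_sphericalCapPairs (s : ℝ) : IsClosed (sphericalCapPairs (E := E) s) :=
  (isClosed_eq (continuous_norm.comp continuous_fst) continuous_const).inter <|
    (isClosed_eq (continuous_norm.comp continuous_snd) continuous_const).inter <|
      isClosed_le (f := fun _ ↦ s) (g := fun p : E × E ↦ ⟪p.1, p.2⟫) continuous_const
        (by fun_prop)

lemma preimage_swap_sphericalCapPairs (s : ℝ) :
    Prod.swap ⁻¹' sphericalCapPairs (E := E) s = sphericalCapPairs s := by
  ext p
  simp only [sphericalCapPairs, mem_preimage, mem_ofPred_eq, Prod.fst_swap, Prod.snd_swap,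
    real_inner_comm p.1, and_left_comm]

lemma preimage_mk_sphericalCapPairs {x : E} (hx : ‖x‖ = 1) (s : ℝ) :
    Prod.mk x ⁻¹' sphericalCapPairs s = sphericalCap x s := by
  ext o
  simp [sphericalCapPairs, sphericalCap, hx]

variable [MeasurableSpace E] [BorelSpace E]

lemma measure_sphericalCap_eq_of_norm_eq {μ : Measure E}
    (hμ : ∀ R : E ≃ₗᵢ[ℝ] E, μ.map R = μ) {x z : E} (h : ‖z‖ = ‖x‖) (s : ℝ) :
    μ (sphericalCap x s) = μ (sphericalCap z s) := by
  set R := (ℝ ∙ (z - x))ᗮ.reflection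
  rw [← preimage_reflection_sphericalCap h, ← Measure.map_apply R.continuous.measurable
    (isClosed_sphericalCap z s).measurableSet, hμ R]

end SphericalCap

namespace IsUniformOnSphere

variable {ι : Type*} [Fintype ι] {μ ν : Measure (EuclideanSpace ℝ ι)}

lemma ae_norm_eq_one (hμ : IsUniformOnSphere μ) : ∀ᵐ x ∂μ, ‖x‖ = 1 := by
  simpa [ae_iff, compl_def, mem_sphere_zero_iff_norm] using hμ.2.1

lemma prod_sphericalCapPairs (hμ : IsUniformOnSphere μ) (hν : IsUniformOnSphere ν)
    {z : EuclideanSpace ℝ ι} (hz : ‖z‖ = 1) (s : ℝ) :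
    ν.prod μ (sphericalCapPairs s) = μ (sphericalCap z s) := by
  have := hμ.1
  have := hν.1
  rw [Measure.prod_apply (isClosed_sphericalCapPairs s).measurableSet,
    lintegral_congr_ae (g := fun _ ↦ μ (sphericalCap z s)), lintegral_const, measure_univ,
    mul_one]
  filter_upwards [hν.ae_norm_eq_one] with x hx
  rw [preimage_mk_sphericalCapPairs hx]
  exact measure_sphericalCap_eq_of_norm_eq hμ.2.2 (hz.trans hx.symm) s

lemma measure_sphericalCap_eq (hμ : IsUniformOnSphere μ) (hν : IsUniformOnSphere ν)
    {z : EuclideanSpace ℝ ι} (hz : ‖z‖ = 1) (s : ℝ) :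
    μ (sphericalCap z s) = ν (sphericalCap z s) := by
  have := hμ.1
  have := hν.1
  rw [← hμ.prod_sphericalCapPairs hν hz, ← hν.prod_sphericalCapPairs hμ hz, ← Measure.prod_swap,
    Measure.map_apply measurable_swap (isClosed_sphericalCapPairs s).measurableSet,
    preimage_swap_sphericalCapPairs]

lemma measure_norm_sub_sq_le (hμ : IsUniformOnSphere μ) {z : EuclideanSpace ℝ ι}
    (hz : ‖z‖ = 1) (t : ℝ) :
    μ {o | ‖z - o‖ ^ 2 ≤ t} = μ (sphericalCap z (1 - t / 2)) := by
  rw [← measure_inter_conull hμ.2.1]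
  congr 1
  ext o
  simp only [mem_inter_iff, mem_ofPred_eq, mem_sphere_zero_iff_norm, sphericalCap]
  constructor
  · rintro ⟨h, ho⟩
    rw [norm_sub_sq_real, hz, ho] at h
    exact ⟨ho, by linarith⟩
  · rintro ⟨ho, h⟩
    refine ⟨?_, ho⟩
    rw [norm_sub_sq_real, hz, ho]
    linarith

end IsUniformOnSphere

section ConeMeasure

variable {E : Type*} [NormedAddCommGroup E] [InnerProductSpace ℝ E]

def sphericalSector (z : E) (s : ℝ) : Set E := {x | s * ‖x‖ ≤ ⟪z, x⟫ ∧ ‖x‖ < 1}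

lemma preimage_normalize_sphericalCap_inter_ball (z : E) (s : ℝ) :
    (fun x : E ↦ ‖x‖⁻¹ • x) ⁻¹' sphericalCap z s ∩ ball 0 1 = sphericalSector z s \ {0} := by
  ext x
  rcases eq_or_ne x 0 with rfl | hx
  · simp [sphericalCap]
  have hx' : 0 < ‖x‖ := norm_pos_iff.2 hx
  simp only [sphericalCap, sphericalSector, mem_inter_iff, mem_preimage, mem_ofPred_eq,
    mem_ball_zero_iff, Set.mem_sdiff, mem_singleton_iff, hx, not_false_eq_true, and_true,
    norm_smul, norm_inv, norm_norm, inv_mul_cancel₀ hx'.ne', real_inner_smul_right, true_and,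
    le_inv_mul_iff₀ hx', mul_comm s]

variable {ι : Type*} [Fintype ι]

def coneMeasure (ι : Type*) [Fintype ι] : Measure (EuclideanSpace ℝ ι) :=
  (volume (ball (0 : EuclideanSpace ℝ ι) 1))⁻¹ •
    (volume.restrict (ball 0 1)).map fun x ↦ ‖x‖⁻¹ • x

lemma coneMeasure_apply {A : Set (EuclideanSpace ℝ ι)} (hA : MeasurableSet A) :
    coneMeasure ι A = (volume (ball (0 : EuclideanSpace ℝ ι) 1))⁻¹ *
      volume ((fun x ↦ ‖x‖⁻¹ • x) ⁻¹' A ∩ ball 0 1) := by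
  have hN : Measurable fun x : EuclideanSpace ℝ ι ↦ ‖x‖⁻¹ • x := by fun_prop
  rw [coneMeasure, Measure.smul_apply, Measure.map_apply hN hA,
    Measure.restrict_apply (hN hA), smul_eq_mul]

lemma coneMeasure_sphericalCap [Nonempty ι] (z : EuclideanSpace ℝ ι) (s : ℝ) :
    coneMeasure ι (sphericalCap z s) =
      (volume (ball (0 : EuclideanSpace ℝ ι) 1))⁻¹ * volume (sphericalSector z s) := by
  rw [coneMeasure_apply (isClosed_sphericalCap z s).measurableSet,
    preimage_normalize_sphericalCap_inter_ball z s, measure_sdiff_null (measure_singleton 0)]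

lemma isUniformOnSphere_coneMeasure [Nonempty ι] : IsUniformOnSphere (coneMeasure ι) := by
  have hB0 : volume (ball (0 : EuclideanSpace ℝ ι) 1) ≠ 0 := (measure_ball_pos _ _ one_pos).ne'
  refine ⟨⟨?_⟩, ?_, fun R ↦ ?_⟩
  · rw [coneMeasure_apply MeasurableSet.univ, preimage_univ, univ_inter,
      ENNReal.inv_mul_cancel hB0 measure_ball_lt_top.ne]
  · rw [coneMeasure_apply isClosed_sphere.measurableSet.compl]
    refine mul_eq_zero_of_right _ (measure_mono_null (fun x hx ↦ ?_) (measure_singleton 0))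
    by_contra h0
    exact hx.1 (by simp [norm_smul, inv_mul_cancel₀ (norm_ne_zero_iff.2 h0)])
  · have hN : Measurable fun x : EuclideanSpace ℝ ι ↦ ‖x‖⁻¹ • x := by fun_prop
    have hcomm : (R ∘ fun x ↦ ‖x‖⁻¹ • x) = (fun x ↦ ‖x‖⁻¹ • x) ∘ R := by
      ext1 x
      simp [R.norm_map]
    have hRB : (volume.restrict (ball (0 : EuclideanSpace ℝ ι) 1)).map R =
        volume.restrict (ball 0 1) := by
      have := (R.measurePreserving.restrict_preimage
        (measurableSet_ball (x := (0 : EuclideanSpace ℝ ι)) (ε := 1))).map_eq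
      rwa [R.preimage_ball, map_zero] at this
    rw [coneMeasure, Measure.map_smul, Measure.map_map R.continuous.measurable hN, hcomm,
      ← Measure.map_map hN R.continuous.measurable, hRB]

lemma IsUniformOnSphere.measure_sphericalCap [Nonempty ι] {μ : Measure (EuclideanSpace ℝ ι)}
    (hμ : IsUniformOnSphere μ) {z : EuclideanSpace ℝ ι} (hz : ‖z‖ = 1) (s : ℝ) :
    μ (sphericalCap z s) =
      (volume (ball (0 : EuclideanSpace ℝ ι) 1))⁻¹ * volume (sphericalSector z s) := by
  rw [hμ.measure_sphericalCap_eq isUniformOnSphere_coneMeasure hz, coneMeasure_sphericalCap z s]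

end ConeMeasure

section TruncatedCone

lemma volume_sum_sq_le {ι : Type*} [Fintype ι] {r : ℝ} (hr : 0 ≤ r) :
    volume {y : ι → ℝ | ∑ i, y i ^ 2 ≤ r ^ 2} =
      ENNReal.ofReal (r ^ Fintype.card ι) * volume (ball (0 : EuclideanSpace ℝ ι) 1) := by
  have hball : (MeasurableEquiv.toLp 2 (ι → ℝ)).symm ⁻¹' {y | ∑ i, y i ^ 2 ≤ r ^ 2} =
      closedBall (0 : EuclideanSpace ℝ ι) r := by
    ext x
    simp [← pow_le_pow_iff_left₀ (norm_nonneg x) hr two_ne_zero, EuclideanSpace.norm_sq_eq]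
  rw [← (EuclideanSpace.volume_preserving_symm_measurableEquiv_toLp ι).measure_preimage
    (measurableSet_le (by fun_prop) measurable_const).nullMeasurableSet, hball,
    Measure.addHaar_closedBall _ _ hr, finrank_euclideanSpace]

lemma setLIntegral_Ico_ofReal_mul_pow (n : ℕ) {c h : ℝ} (hc : 0 ≤ c) (hh : 0 ≤ h) :
    ∫⁻ a in Ico 0 h, ENNReal.ofReal ((c * a) ^ n) =
      ENNReal.ofReal (c ^ n * (h ^ (n + 1) / (n + 1))) := by
  rw [← ofReal_integral_eq_lintegral_ofReal
    ((by fun_prop : Continuous fun a : ℝ ↦ (c * a) ^ n).integrableOn_Icc.mono_set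
      Ico_subset_Icc_self)
    ((ae_restrict_iff' measurableSet_Ico).2 <|
      ae_of_all _ fun a ha ↦ pow_nonneg (mul_nonneg hc ha.1) n)]
  rw [integral_Ico_eq_integral_Ioo, ← integral_Ioc_eq_integral_Ioo,
    ← intervalIntegral.integral_of_le hh]
  simp [mul_pow, integral_pow]

def truncatedCone (n : ℕ) (h c : ℝ) : Set (EuclideanSpace ℝ (Fin (n + 1))) :=
  {x | 0 ≤ x 0 ∧ x 0 < h ∧ ∑ i : Fin n, x i.succ ^ 2 ≤ (c * x 0) ^ 2}

lemma volume_truncatedCone (n : ℕ) {h c : ℝ} (hh : 0 ≤ h) (hc : 0 ≤ c) :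
    volume (truncatedCone n h c) = ENNReal.ofReal (c ^ n * (h ^ (n + 1) / (n + 1))) *
      volume (ball (0 : EuclideanSpace ℝ (Fin n)) 1) := by
  set B := volume (ball (0 : EuclideanSpace ℝ (Fin n)) 1)
  set T : Set (ℝ × (Fin n → ℝ)) := {p | 0 ≤ p.1 ∧ p.1 < h ∧ ∑ i, p.2 i ^ 2 ≤ (c * p.1) ^ 2}
  have hT : MeasurableSet T :=
    (measurableSet_le measurable_const measurable_fst).inter <|
      (measurableSet_lt measurable_fst measurable_const).inter <|
        measurableSet_le (f := fun p : ℝ × (Fin n → ℝ) ↦ ∑ i, p.2 i ^ 2)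
          (g := fun p ↦ (c * p.1) ^ 2) (by fun_prop) (by fun_prop)
  have hslice (a : ℝ) : volume (Prod.mk a ⁻¹' T) =
      (Ico 0 h).indicator (fun a ↦ ENNReal.ofReal ((c * a) ^ n) * B) a := by
    by_cases ha : a ∈ Ico 0 h
    · have : Prod.mk a ⁻¹' T = {y | ∑ i, y i ^ 2 ≤ (c * a) ^ 2} := by
        ext y
        simp [T, ha.1, ha.2]
      rw [this, indicator_of_mem ha, volume_sum_sq_le (mul_nonneg hc ha.1), Fintype.card_fin]
    · have : Prod.mk a ⁻¹' T = ∅ := by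
        ext y
        simp only [T, mem_preimage, mem_ofPred_eq, mem_empty_iff_false, iff_false]
        exact fun ⟨h0, h1, _⟩ ↦ ha ⟨h0, h1⟩
      rw [this, measure_empty, indicator_of_notMem ha]
  have hmp : MeasurePreserving ((MeasurableEquiv.piFinSuccAbove (fun _ ↦ ℝ) 0) ∘
      (MeasurableEquiv.toLp 2 (Fin (n + 1) → ℝ)).symm) volume (volume.prod volume) :=
    (volume_preserving_piFinSuccAbove (fun _ ↦ ℝ) 0).comp
      (EuclideanSpace.volume_preserving_symm_measurableEquiv_toLp (Fin (n + 1)))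
  calc volume (truncatedCone n h c) = volume.prod volume T :=
        hmp.measure_preimage hT.nullMeasurableSet
    _ = ∫⁻ a in Ico 0 h, ENNReal.ofReal ((c * a) ^ n) * B := by
      rw [Measure.prod_apply hT, ← lintegral_indicator measurableSet_Ico]
      exact lintegral_congr hslice
    _ = _ := by
      rw [lintegral_mul_const _ (by fun_prop), setLIntegral_Ico_ofReal_mul_pow n hc hh]

end TruncatedCone

section SectorAsymptotics

variable {n : ℕ}

local notation "e₀" => EuclideanSpace.single (0 : Fin (n + 1)) (1 : ℝ)

lemma norm_sq_eq_sq_zero_add_sum_succ (x : EuclideanSpace ℝ (Fin (n + 1))) :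
    ‖x‖ ^ 2 = x 0 ^ 2 + ∑ i : Fin n, x i.succ ^ 2 := by
  simp [EuclideanSpace.norm_sq_eq, Fin.sum_univ_succ]

lemma mem_sphericalSector_single_zero {s : ℝ} {x : EuclideanSpace ℝ (Fin (n + 1))} :
    x ∈ sphericalSector e₀ s ↔ s * ‖x‖ ≤ x 0 ∧ ‖x‖ < 1 := by
  simp [sphericalSector, EuclideanSpace.inner_single_left]

lemma truncatedCone_subset_sphericalSector {s c : ℝ} (hs : 0 < s)
    (hsc : s ^ 2 * (1 + c ^ 2) = 1) : truncatedCone n s c ⊆ sphericalSector e₀ s := by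
  rintro x ⟨h0, hxs, hsum⟩
  have hx := norm_sq_eq_sq_zero_add_sum_succ x
  have hsx : s * ‖x‖ ≤ x 0 := by
    rw [← pow_le_pow_iff_left₀ (by positivity) h0 two_ne_zero]
    nlinarith
  exact mem_sphericalSector_single_zero.2 ⟨hsx, by nlinarith⟩

lemma sphericalSector_subset_truncatedCone {s c : ℝ} (hs : 0 < s)
    (hsc : s ^ 2 * (1 + c ^ 2) = 1) : sphericalSector e₀ s ⊆ truncatedCone n 1 c := by
  intro x hx
  obtain ⟨hsx, hx1⟩ := mem_sphericalSector_single_zero.1 hx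
  have hx := norm_sq_eq_sq_zero_add_sum_succ x
  have h0 : 0 ≤ x 0 := le_trans (by positivity) hsx
  have hsx2 : s ^ 2 * ‖x‖ ^ 2 ≤ x 0 ^ 2 := by
    rw [← mul_pow]
    exact pow_le_pow_left₀ (by positivity) hsx 2
  have hsum : 0 ≤ ∑ i : Fin n, x i.succ ^ 2 := by positivity
  refine ⟨h0, by nlinarith [norm_nonneg x], ?_⟩
  have : s ^ 2 * ∑ i : Fin n, x i.succ ^ 2 ≤ s ^ 2 * (c * x 0) ^ 2 := by nlinarith
  exact le_of_mul_le_mul_left this (by positivity)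

lemma volume_sphericalSector_bounds {s c : ℝ} (hs : 0 < s) (hc : 0 ≤ c)
    (hsc : s ^ 2 * (1 + c ^ 2) = 1) :
    c ^ n * (s ^ (n + 1) / (n + 1)) * (volume (ball (0 : EuclideanSpace ℝ (Fin n)) 1)).toReal ≤
        (volume (sphericalSector e₀ s)).toReal ∧
      (volume (sphericalSector e₀ s)).toReal ≤
        c ^ n * (1 / (n + 1)) * (volume (ball (0 : EuclideanSpace ℝ (Fin n)) 1)).toReal := by
  have hsector : volume (sphericalSector e₀ s) ≠ ⊤ :=
    ne_top_of_le_ne_top measure_ball_lt_top.ne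
      (measure_mono fun x hx ↦ mem_ball_zero_iff.2 hx.2)
  constructor
  · have := ENNReal.toReal_mono hsector
      (measure_mono (truncatedCone_subset_sphericalSector hs hsc))
    rwa [volume_truncatedCone n hs.le hc, ENNReal.toReal_mul,
      ENNReal.toReal_ofReal (by positivity)] at this
  · have := ENNReal.toReal_mono
      (ENNReal.mul_ne_top ENNReal.ofReal_ne_top measure_ball_lt_top.ne)
      ((measure_mono (μ := volume) (sphericalSector_subset_truncatedCone hs hsc)).trans_eq
        (volume_truncatedCone n zero_le_one hc))
    rwa [ENNReal.toReal_mul,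
      ENNReal.toReal_ofReal (by positivity), one_pow] at this

variable (n) in
lemma tendsto_rpow_mul_volume_sphericalSector :
    Tendsto (fun t : ℝ ↦ t ^ (-(n / 2 : ℝ)) * (volume (sphericalSector e₀ (1 - t / 2))).toReal)
      (𝓝[>] 0) (𝓝 ((volume (ball (0 : EuclideanSpace ℝ (Fin n)) 1)).toReal / (n + 1))) := by
  set B := (volume (ball (0 : EuclideanSpace ℝ (Fin n)) 1)).toReal
  -- the sector at height `1 - t / 2` has opening slope `√t * g t`
  set g : ℝ → ℝ := fun t ↦ √(1 - t / 4) / (1 - t / 2)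
  have hg : Tendsto g (𝓝[>] 0) (𝓝 1) := by
    have : ContinuousAt g 0 :=
      ((continuous_const.sub (continuous_id.div_const 4)).sqrt.continuousAt).div
        (continuous_const.sub (continuous_id.div_const 2)).continuousAt (by norm_num)
    simpa [g] using this.tendsto.mono_left nhdsWithin_le_nhds
  have h12 : Tendsto (fun t : ℝ ↦ 1 - t / 2) (𝓝[>] 0) (𝓝 1) := by
    have : Continuous fun t : ℝ ↦ 1 - t / 2 := by fun_prop
    simpa using (this.tendsto 0).mono_left nhdsWithin_le_nhds
  have hlower : Tendsto (fun t ↦ g t ^ n * ((1 - t / 2) ^ (n + 1) / (n + 1)) * B)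
      (𝓝[>] 0) (𝓝 (B / (n + 1))) := by
    simpa [div_eq_inv_mul] using ((hg.pow n).mul ((h12.pow (n + 1)).div_const _)).mul_const B
  have hupper : Tendsto (fun t ↦ g t ^ n * (1 / (n + 1)) * B) (𝓝[>] 0) (𝓝 (B / (n + 1))) := by
    simpa [div_eq_inv_mul] using ((hg.pow n).mul_const (1 / (n + 1 : ℝ))).mul_const B
  have hbounds : ∀ᶠ t in 𝓝[>] 0,
      g t ^ n * ((1 - t / 2) ^ (n + 1) / (n + 1)) * B ≤
          t ^ (-(n / 2 : ℝ)) * (volume (sphericalSector e₀ (1 - t / 2))).toReal ∧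
        t ^ (-(n / 2 : ℝ)) * (volume (sphericalSector e₀ (1 - t / 2))).toReal ≤
          g t ^ n * (1 / (n + 1)) * B := by
    filter_upwards [Ioo_mem_nhdsGT one_pos] with t ⟨ht0, ht1⟩
    have hs : 0 < 1 - t / 2 := by linarith
    have hsc : (1 - t / 2) ^ 2 * (1 + (√t * g t) ^ 2) = 1 := by
      rw [mul_pow, div_pow, Real.sq_sqrt ht0.le, Real.sq_sqrt (by linarith)]
      rw [mul_add, mul_one, mul_left_comm, mul_div_cancel₀ _ (pow_ne_zero 2 hs.ne')]
      ring
    have hscale : t ^ (-(n / 2 : ℝ)) * (√t * g t) ^ n = g t ^ n := by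
      rw [mul_pow, ← mul_assoc, Real.sqrt_eq_rpow, ← Real.rpow_natCast, ← Real.rpow_mul ht0.le,
        ← Real.rpow_add ht0, show -(n / 2 : ℝ) + 1 / 2 * n = 0 by ring, Real.rpow_zero, one_mul]
    obtain ⟨hlo, hhi⟩ := volume_sphericalSector_bounds (n := n) hs (by positivity) hsc
    rw [← hscale]
    constructor
    · calc _ = t ^ (-(n / 2 : ℝ)) * ((√t * g t) ^ n * ((1 - t / 2) ^ (n + 1) / (n + 1)) * B) := by
            ring
        _ ≤ _ := by gcongr
    · calc _ ≤ t ^ (-(n / 2 : ℝ)) * ((√t * g t) ^ n * (1 / (n + 1)) * B) := by gcongr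
        _ = _ := by ring
  exact tendsto_of_tendsto_of_tendsto_of_le_of_le' hlower hupper
    (hbounds.mono fun _ h ↦ h.1) (hbounds.mono fun _ h ↦ h.2)

end SectorAsymptotics

lemma toReal_volume_ball_eq_unitBallVol (ι : Type*) [Fintype ι] [Nonempty ι] :
    (volume (ball (0 : EuclideanSpace ℝ ι) 1)).toReal = unitBallVol (Fintype.card ι) := by
  rw [EuclideanSpace.volume_ball, ENNReal.ofReal_one, one_pow, one_mul,
    ENNReal.toReal_ofReal (by positivity), unitBallVol, add_comm 1, Real.sqrt_eq_rpow,
    ← Real.rpow_natCast, ← Real.rpow_mul Real.pi_pos.le, one_div_mul_eq_div]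

lemma sphereArea_eq_mul_unitBallVol (d : ℕ) : sphereArea d = d * unitBallVol d := by
  rcases eq_or_ne d 0 with rfl | hd
  · simp [sphereArea]
  have hd2 : (d / 2 : ℝ) ≠ 0 := by positivity
  rw [sphereArea, unitBallVol, add_comm 1, Real.Gamma_add_one hd2]
  field_simp

end

theorem stmt18 (d : ℕ) (hd : 2 ≤ d)
    (μ : Measure (EuclideanSpace ℝ (Fin d))) (hμ : IsUniformOnSphere μ)
    (z : EuclideanSpace ℝ (Fin d)) (hz : ‖z‖ = 1) :
    Filter.Tendsto
      (fun t : ℝ =>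
        t ^ (-(((d : ℝ) - 1) / 2)) *
          (μ {o : EuclideanSpace ℝ (Fin d) | ‖z - o‖ ^ 2 ≤ t}).toReal)
      (nhdsWithin 0 (Set.Ioi 0))
      (nhds (unitBallVol (d - 1) / sphereArea d)) := by
  obtain ⟨n, rfl⟩ : ∃ n, d = n + 1 := ⟨d - 1, by omega⟩
  have : Nonempty (Fin n) := ⟨⟨0, by omega⟩⟩
  set e₀ : EuclideanSpace ℝ (Fin (n + 1)) := EuclideanSpace.single 0 1
  have hconst : unitBallVol (n + 1 - 1) / sphereArea (n + 1) =
      (volume (ball (0 : EuclideanSpace ℝ (Fin n)) 1)).toReal / (n + 1) /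
        (volume (ball (0 : EuclideanSpace ℝ (Fin (n + 1))) 1)).toReal := by
    rw [Nat.add_sub_cancel, sphereArea_eq_mul_unitBallVol, toReal_volume_ball_eq_unitBallVol,
      toReal_volume_ball_eq_unitBallVol, Fintype.card_fin, Fintype.card_fin, div_div]
    push_cast
    rfl
  have hexp : -((((n + 1 : ℕ) : ℝ) - 1) / 2) = -(n / 2 : ℝ) := by push_cast; ring
  rw [hconst, hexp]
  refine ((tendsto_rpow_mul_volume_sphericalSector n).div_const _).congr fun t ↦ ?_
  have he₀ : ‖e₀‖ = 1 := by simp [e₀]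
  rw [hμ.measure_norm_sub_sq_le hz, measure_sphericalCap_eq_of_norm_eq hμ.2.2 (he₀.trans hz.symm),
    hμ.measure_sphericalCap he₀, ENNReal.toReal_mul, ENNReal.toReal_inv]
  ring
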